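/- Let K, M > 0 with K = c M²/8 for some 0 < c ≤ 8, and let P̂(u) = Σ_{k=1}^K a_k H_k(u) where H_k is the k-th Hermite polynomial and |a_k| ≤ B M^{-k} (1+√2)^K for all k. If ξ ~ N(θ,1) with |θ| > M, then |E[P̂(ξ)]| ≤ A · B · K (1+√2)^K e^{cθ²/16} for an absolute constant A. -/

import Mathlib

open MeasureTheory ProbabilityTheory Polynomial
open scoped NNReal

/-!
Gaussian integration by parts (Stein's identity) `𝔼[(ξ - μ) p(ξ)] = v 𝔼[p'(ξ)]` for
`ξ ~ N(μ, v)` and polynomial `p`, together with the recursion `H_{n+1} = X H_n - H_n'`, gives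
`𝔼[H_n(ξ)] = θⁿ` for `ξ ~ N(θ, 1)`; hence `𝔼[P̂(ξ)] = ∑ a_k θ^k`. As `|θ| > M`, each term is
at most `B (1+√2)^K (|θ|/M)^K`, and `(|θ|/M)^K = exp ((cM²/8) log (|θ|/M)) ≤ exp (cθ²/16)`
because `M² log (|θ|/M) ≤ θ²/2`. So `A = 1` works.
-/

namespace ProbabilityTheory

variable {R : Type*} [CommRing R] [Algebra R ℝ] (μ : ℝ) (v : ℝ≥0)

lemma integrable_aeval_gaussianReal (p : R[X]) :
    Integrable (fun x ↦ aeval x p) (gaussianReal μ v) := by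
  induction p using Polynomial.induction_on' with
  | add p q hp hq => simp only [map_add]; exact hp.add hq
  | monomial n a =>
    have hpow : Integrable (fun x : ℝ ↦ x ^ n) (gaussianReal μ v) :=
      (memLp_id_gaussianReal (μ := μ) (v := v) n).integrable_norm_pow'.mono' (by fun_prop)
        (ae_of_all _ fun x ↦ (norm_pow x n).le)
    simpa only [aeval_monomial] using hpow.const_mul (algebraMap R ℝ a)

lemma hasDerivAt_gaussianPDFReal (x : ℝ) :
    HasDerivAt (gaussianPDFReal μ v) (-(x - μ) / v * gaussianPDFReal μ v x) x := by
  have hexp : HasDerivAt (fun y ↦ -(y - μ) ^ 2 / (2 * v)) (-(x - μ) / v) x := by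
    refine ((((hasDerivAt_id' x).sub_const μ).pow 2).neg.div_const (2 * (v : ℝ))).congr_deriv ?_
    norm_num
    ring
  exact (hexp.exp.const_mul (√(2 * Real.pi * v))⁻¹).congr_deriv (by rw [gaussianPDFReal]; ring)

lemma integrable_gaussianPDFReal_mul {f : ℝ → ℝ} (hv : v ≠ 0)
    (hf : Integrable f (gaussianReal μ v)) :
    Integrable (fun x ↦ gaussianPDFReal μ v x * f x) := by
  rw [gaussianReal_of_var_ne_zero μ hv, integrable_withDensity_iff_integrable_smul'
    (measurable_gaussianPDF μ v) (ae_of_all _ fun _ ↦ gaussianPDF_lt_top)] at hf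
  simpa only [toReal_gaussianPDF, smul_eq_mul] using hf

lemma integrable_sub_mul_aeval_gaussianReal (p : R[X]) :
    Integrable (fun x ↦ (x - μ) * aeval x p) (gaussianReal μ v) := by
  have h := (integrable_aeval_gaussianReal μ v (X * p)).sub
    ((integrable_aeval_gaussianReal μ v p).const_mul μ)
  simpa only [map_mul, aeval_X, sub_mul, Pi.sub_def] using h

theorem integral_sub_mul_aeval_gaussianReal (p : R[X]) :
    ∫ x, (x - μ) * aeval x p ∂gaussianReal μ v =
      v * ∫ x, aeval x (derivative p) ∂gaussianReal μ v := by
  rcases eq_or_ne v 0 with rfl | hv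
  · simp -- `gaussianReal μ 0` is the Dirac mass at `μ`, so both sides vanish
  have hint := fun q : R[X] ↦
    integrable_gaussianPDFReal_mul μ v hv (integrable_aeval_gaussianReal μ v q)
  have hsub := integrable_gaussianPDFReal_mul μ v hv (integrable_sub_mul_aeval_gaussianReal μ v p)
  have ibp := integral_mul_deriv_eq_deriv_mul_of_integrable
    (fun x _ ↦ p.hasDerivAt_aeval x) (fun x _ ↦ hasDerivAt_gaussianPDFReal μ v x)
    ((hsub.const_mul (-(v : ℝ)⁻¹)).congr
      (ae_of_all _ fun x ↦ by simp only [Pi.mul_apply]; ring))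
    ((hint (derivative p)).congr (ae_of_all _ fun x ↦ by simp only [Pi.mul_apply]; ring))
    ((hint p).congr (ae_of_all _ fun x ↦ by simp only [Pi.mul_apply]; ring))
  simp only [integral_gaussianReal_eq_integral_smul hv, smul_eq_mul]
  have hv' : (v : ℝ) ≠ 0 := mod_cast hv
  calc ∫ x, gaussianPDFReal μ v x * ((x - μ) * aeval x p)
      = -v * ∫ x, aeval x p * (-(x - μ) / v * gaussianPDFReal μ v x) := by
        rw [← integral_const_mul]
        congr 1 with x
        field_simp
    _ = v * ∫ x, gaussianPDFReal μ v x * aeval x (derivative p) := by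
        simp only [ibp, mul_comm (gaussianPDFReal μ v _)]
        ring

theorem integral_aeval_hermite_gaussianReal (n : ℕ) :
    ∫ x, aeval x (hermite n) ∂gaussianReal μ 1 = μ ^ n := by
  induction n with
  | zero => simp
  | succ n ih =>
    have hrec : ∀ x : ℝ, aeval x (hermite (n + 1)) = ((x - μ) * aeval x (hermite n) -
        aeval x (derivative (hermite n))) + μ * aeval x (hermite n) := fun x ↦ by
      rw [hermite_succ]
      simp only [map_sub, map_mul, aeval_X]
      ring
    simp_rw [hrec]
    rw [integral_add, integral_sub, integral_const_mul, integral_sub_mul_aeval_gaussianReal, ih]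
    · simp only [NNReal.coe_one, one_mul, sub_self, zero_add, pow_succ']
    · exact integrable_sub_mul_aeval_gaussianReal μ 1 _
    · exact integrable_aeval_gaussianReal μ 1 _
    · exact (integrable_sub_mul_aeval_gaussianReal μ 1 _).sub
        (integrable_aeval_gaussianReal μ 1 _)
    · exact (integrable_aeval_gaussianReal μ 1 _).const_mul μ

end ProbabilityTheory

lemma Real.sq_mul_log_div_le {x y : ℝ} (hx : 0 < x) (hy : 0 < y) :
    x ^ 2 * Real.log (y / x) ≤ y ^ 2 / 2 :=
  calc x ^ 2 * Real.log (y / x)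
      ≤ x ^ 2 * (y / x - 1) := by gcongr; exact Real.log_le_sub_one_of_pos (by positivity)
    _ = x * y - x ^ 2 := by field_simp
    _ ≤ y ^ 2 / 2 := by nlinarith [sq_nonneg (x - y), sq_nonneg x]

lemma div_pow_le_exp_of_natCast_eq {c M t : ℝ} {K : ℕ} (hc : 0 ≤ c) (hM : 0 < M) (ht : 0 < t)
    (hK : (K : ℝ) = c * M ^ 2 / 8) : (t / M) ^ K ≤ Real.exp (c * t ^ 2 / 16) := by
  rw [← Real.exp_log (pow_pos (div_pos ht hM) K), Real.log_pow, Real.exp_le_exp, hK]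
  calc c * M ^ 2 / 8 * Real.log (t / M)
      = c / 8 * (M ^ 2 * Real.log (t / M)) := by ring
    _ ≤ c / 8 * (t ^ 2 / 2) := by gcongr; exact Real.sq_mul_log_div_le hM ht
    _ = c * t ^ 2 / 16 := by ring

lemma abs_mul_pow_le {a C M R t : ℝ} {k K : ℕ} (hM : 0 < M) (hMt : M ≤ |t|) (hk : k ≤ K)
    (hR : (|t| / M) ^ K ≤ R) (ha : |a| ≤ C / M ^ k) : |a * t ^ k| ≤ C * R := by
  have hC : 0 ≤ C := by
    simpa using (le_div_iff₀ (by positivity)).mp ((abs_nonneg a).trans ha)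
  calc |a * t ^ k| = |a| * |t| ^ k := by rw [abs_mul, abs_pow]
    _ ≤ C / M ^ k * |t| ^ k := by gcongr
    _ = C * (|t| / M) ^ k := by rw [div_pow]; ring
    _ ≤ C * (|t| / M) ^ K := by gcongr; exact (one_le_div hM).mpr hMt
    _ ≤ C * R := by gcongr

lemma abs_sum_Icc_mul_pow_le {a : ℕ → ℝ} {C M R t : ℝ} {K : ℕ} (hM : 0 < M) (hMt : M ≤ |t|)
    (hR : (|t| / M) ^ K ≤ R) (ha : ∀ k, 1 ≤ k → k ≤ K → |a k| ≤ C / M ^ k) :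
    |∑ k ∈ Finset.Icc 1 K, a k * t ^ k| ≤ K * C * R :=
  calc |∑ k ∈ Finset.Icc 1 K, a k * t ^ k|
      ≤ ∑ k ∈ Finset.Icc 1 K, |a k * t ^ k| := Finset.abs_sum_le_sum_abs _ _
    _ ≤ (Finset.Icc 1 K).card • (C * R) := Finset.sum_le_card_nsmul _ _ _ fun k hk ↦
        have ⟨hk1, hkK⟩ := Finset.mem_Icc.mp hk
        abs_mul_pow_le hM hMt hkK hR (ha k hk1 hkK)
    _ = K * C * R := by rw [Nat.card_Icc, nsmul_eq_mul]; push_cast; ring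

/-- There is an absolute constant `A > 0` such that if `K = cM²/8` with `0 < c ≤ 8`,
`P̂(u) = ∑_{k=1}^K a_k H_k(u)` with `|a_k| ≤ B (1+√2)^K / M^k`, and `ξ ~ N(θ,1)` with
`|θ| > M`, then `|E[P̂(ξ)]| ≤ A B K (1+√2)^K e^(cθ²/16)`. -/
theorem mean_bound_outside :
    ∃ A : ℝ, 0 < A ∧
      ∀ (c M B θ : ℝ) (K : ℕ) (a : ℕ → ℝ),
        0 < c → c ≤ 8 → 0 < M → (K : ℝ) = c * M ^ 2 / 8 →
        (∀ k, 1 ≤ k → k ≤ K → |a k| ≤ B * (1 + Real.sqrt 2) ^ K / M ^ k) →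
        M < |θ| →
        |∫ u, (∑ k ∈ Finset.Icc 1 K, a k * (Polynomial.aeval u (Polynomial.hermite k) : ℝ))
            ∂(gaussianReal θ 1)|
          ≤ A * B * K * (1 + Real.sqrt 2) ^ K * Real.exp (c * θ ^ 2 / 16) := by
  refine ⟨1, one_pos, fun c M B θ K a hc _ hM hK ha hMθ ↦ ?_⟩
  have hmean : ∫ u, (∑ k ∈ Finset.Icc 1 K, a k * (aeval u (hermite k) : ℝ))
      ∂(gaussianReal θ 1) = ∑ k ∈ Finset.Icc 1 K, a k * θ ^ k := by
    rw [integral_finsetSum _ fun k _ ↦ (integrable_aeval_gaussianReal θ 1 _).const_mul _]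
    simp only [integral_const_mul, integral_aeval_hermite_gaussianReal]
  have hpow : (|θ| / M) ^ K ≤ Real.exp (c * θ ^ 2 / 16) := by
    simpa only [sq_abs] using div_pow_le_exp_of_natCast_eq hc.le hM (hM.trans hMθ) hK
  rw [hmean]
  exact (abs_sum_Icc_mul_pow_le hM hMθ.le hpow ha).trans_eq (by ring)
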